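/- Let Σ_x be a real n×n positive semidefinite matrix, Φ a real ℓ×n matrix, and Σ := Σ_x^{1/2}·Φᵀ·Φ·Σ_x^{1/2}. Let u₁,…,u_n be an orthonormal basis of ℝⁿ consisting of eigenvectors of Σ, with Σ·uᵢ = λᵢ·uᵢ and λᵢ ≥ 0 for all i. Then for every σ² > 0, MMSE(σ²) = Σ_{i=1}^{n} (σ²/(σ² + λᵢ)) · uᵢᵀ·Σ_x·uᵢ. -/

import Mathlib

/-! Write `S = Σ_x^{1/2}` and `B = Φ S`, so that `Φ Σ_x Φᵀ = B Bᵀ` and `Σ = Bᵀ B`. The push-through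
identity `Bᵀ (σ² + B Bᵀ)⁻¹ = (σ² + Bᵀ B)⁻¹ Bᵀ` turns the error covariance into
`S (1 - Bᵀ (σ² + B Bᵀ)⁻¹ B) S = σ² S (σ² + Σ)⁻¹ S`, whose trace is `σ² tr(Σ_x (σ² + Σ)⁻¹)`.
Evaluating this trace in the eigenbasis `uᵢ` of `Σ`, on which `(σ² + Σ)⁻¹` acts as
`(σ² + λᵢ)⁻¹`, gives the formula. -/

open Matrix

/-- The positive semidefinite square root, as defined in Mathlib (Dec 2024), since removed. -/
noncomputable def Matrix.PosSemidef.sqrt {n : Type*} [Fintype n] [DecidableEq n]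
    {A : Matrix n n ℝ} (hA : A.PosSemidef) : Matrix n n ℝ :=
  (hA.1.eigenvectorUnitary : Matrix n n ℝ) *
    diagonal ((↑) ∘ (fun x : ℝ => Real.sqrt x) ∘ hA.1.eigenvalues) *
    (star hA.1.eigenvectorUnitary : Matrix n n ℝ)

namespace Matrix.PosSemidef

open scoped MatrixOrder

variable {n : Type*} [Fintype n] [DecidableEq n] {A : Matrix n n ℝ}

theorem sqrt_eq_cfcSqrt (hA : A.PosSemidef) : hA.sqrt = CFC.sqrt A := by
  rw [CFC.sqrt_eq_real_sqrt A hA.nonneg, cfcₙ_eq_cfc, hA.1.cfc_eq, IsHermitian.cfc,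
    Unitary.conjStarAlgAut_apply]
  rfl

theorem transpose_sqrt (hA : A.PosSemidef) : hA.sqrtᵀ = hA.sqrt := by
  rw [← conjTranspose_eq_transpose_of_trivial, sqrt_eq_cfcSqrt]
  exact (CFC.sqrt_nonneg A).isSelfAdjoint

theorem sqrt_mul_self (hA : A.PosSemidef) : hA.sqrt * hA.sqrt = A := by
  rw [sqrt_eq_cfcSqrt]
  exact CFC.sqrt_mul_sqrt_self A hA.nonneg

end Matrix.PosSemidef

namespace Matrix

section Field

variable {m n K : Type*} [Fintype m] [Fintype n] [DecidableEq m] [DecidableEq n] [Field K]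

theorem mul_nonsing_inv_eq_nonsing_inv_mul_of_mul_eq {A : Matrix m m K} {B : Matrix n n K}
    {X : Matrix m n K} (hA : IsUnit A.det) (hB : IsUnit B.det) (h : A * X = X * B) :
    X * B⁻¹ = A⁻¹ * X := by
  calc X * B⁻¹ = A⁻¹ * (A * X) * B⁻¹ := by rw [nonsing_inv_mul_cancel_left A X hA]
    _ = A⁻¹ * X := by rw [h, ← Matrix.mul_assoc, mul_nonsing_inv_cancel_right B (A⁻¹ * X) hB]

theorem nonsing_inv_mulVec_eq_inv_smul {A : Matrix n n K} {v : n → K} {μ : K}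
    (hA : IsUnit A.det) (hμ : μ ≠ 0) (h : A *ᵥ v = μ • v) : A⁻¹ *ᵥ v = μ⁻¹ • v := by
  calc A⁻¹ *ᵥ v = μ⁻¹ • (μ • A⁻¹ *ᵥ v) := by rw [smul_smul, inv_mul_cancel₀ hμ, one_smul]
    _ = μ⁻¹ • v := by rw [← mulVec_smul, ← h, mulVec_mulVec, nonsing_inv_mul _ hA, one_mulVec]

end Field

theorem trace_eq_sum_dotProduct_mulVec {n R : Type*} [Fintype n] [DecidableEq n] [CommRing R]
    {u : n → n → R} (hu : ∀ i j, u i ⬝ᵥ u j = if i = j then 1 else 0) (M : Matrix n n R) :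
    M.trace = ∑ i, u i ⬝ᵥ M *ᵥ u i := by
  have hU : of u * (of u)ᵀ = 1 := by
    ext i j
    simpa [mul_apply, dotProduct, one_apply] using hu i j
  calc M.trace = (of u * M * (of u)ᵀ).trace := by
        rw [trace_mul_cycle, mul_eq_one_comm.mp hU, Matrix.one_mul]
    _ = ∑ i, u i ⬝ᵥ M *ᵥ u i := by
        simp only [trace, diag, mul_mul_apply, transpose_transpose]
        rfl

section Real

variable {m n : Type*} [Fintype m] [Fintype n] (B : Matrix m n ℝ) {c : ℝ}

theorem isUnit_det_smul_one_add_mul_transpose [DecidableEq m] (hc : 0 < c) :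
    IsUnit (c • (1 : Matrix m m ℝ) + B * Bᵀ).det := by
  have hpsd : (B * Bᵀ).PosSemidef := by
    simpa only [conjTranspose_eq_transpose_of_trivial] using posSemidef_self_mul_conjTranspose B
  exact (isUnit_iff_isUnit_det _).mp ((PosDef.one.smul hc).add_posSemidef hpsd).isUnit

theorem isUnit_det_smul_one_add_transpose_mul [DecidableEq n] (hc : 0 < c) :
    IsUnit (c • (1 : Matrix n n ℝ) + Bᵀ * B).det := by
  simpa only [transpose_transpose] using isUnit_det_smul_one_add_mul_transpose Bᵀ hc

variable [DecidableEq m] [DecidableEq n]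

theorem transpose_mul_inv_smul_one_add_mul_transpose (hc : 0 < c) :
    Bᵀ * (c • (1 : Matrix m m ℝ) + B * Bᵀ)⁻¹ = (c • (1 : Matrix n n ℝ) + Bᵀ * B)⁻¹ * Bᵀ := by
  refine mul_nonsing_inv_eq_nonsing_inv_mul_of_mul_eq
    (isUnit_det_smul_one_add_transpose_mul B hc) (isUnit_det_smul_one_add_mul_transpose B hc) ?_
  simp only [Matrix.add_mul, Matrix.mul_add, smul_mul, Matrix.mul_smul, Matrix.one_mul,
    Matrix.mul_one, Matrix.mul_assoc]

theorem one_sub_transpose_mul_inv_smul_one_add_mul_transpose_mul (hc : 0 < c) :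
    1 - Bᵀ * (c • (1 : Matrix m m ℝ) + B * Bᵀ)⁻¹ * B =
      c • (c • (1 : Matrix n n ℝ) + Bᵀ * B)⁻¹ := by
  have hinv := nonsing_inv_mul _ (isUnit_det_smul_one_add_transpose_mul B hc)
  rw [Matrix.mul_add, Matrix.mul_smul, Matrix.mul_one] at hinv
  rw [transpose_mul_inv_smul_one_add_mul_transpose B hc, Matrix.mul_assoc]
  linear_combination (norm := noncomm_ring) -hinv

end Real

end Matrix

/-- If u₁,…,u_n is an orthonormal basis of eigenvectors of
Σ = Σ_x^{1/2}·Φᵀ·Φ·Σ_x^{1/2} with nonnegative eigenvalues λᵢ, then for every σ² > 0,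
MMSE(σ²) = ∑ᵢ (σ²/(σ² + λᵢ)) · uᵢᵀ·Σ_x·uᵢ. -/
theorem stmt_1 {n l : ℕ} (Sx : Matrix (Fin n) (Fin n) ℝ) (hSx : Sx.PosSemidef)
    (Φ : Matrix (Fin l) (Fin n) ℝ)
    (u : Fin n → Fin n → ℝ) (lam : Fin n → ℝ)
    (hortho : ∀ i j, u i ⬝ᵥ u j = if i = j then 1 else 0)
    (heig : ∀ i, (hSx.sqrt * Φᵀ * Φ * hSx.sqrt).mulVec (u i) = lam i • u i)
    (hnonneg : ∀ i, 0 ≤ lam i)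
    (σ2 : ℝ) (hσ2 : 0 < σ2) :
    (Sx - Sx * Φᵀ * (σ2 • (1 : Matrix (Fin l) (Fin l) ℝ) + Φ * Sx * Φᵀ)⁻¹ * Φ * Sx).trace
      = ∑ i, (σ2 / (σ2 + lam i)) * (u i ⬝ᵥ Sx.mulVec (u i)) := by
  set S := hSx.sqrt
  have hSS : S * S = Sx := hSx.sqrt_mul_self
  have hBt : (Φ * S)ᵀ = S * Φᵀ := by rw [transpose_mul, hSx.transpose_sqrt]
  have hcov : Sx - Sx * Φᵀ * (σ2 • 1 + Φ * Sx * Φᵀ)⁻¹ * Φ * Sx =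
      S * (1 - (Φ * S)ᵀ * (σ2 • 1 + Φ * S * (Φ * S)ᵀ)⁻¹ * (Φ * S)) * S := by
    rw [hBt]
    simp only [← hSS, Matrix.mul_sub, Matrix.sub_mul, Matrix.mul_one, Matrix.mul_assoc]
  rw [hcov, one_sub_transpose_mul_inv_smul_one_add_mul_transpose_mul (Φ * S) hσ2,
    Matrix.mul_smul, smul_mul]
  set A := σ2 • (1 : Matrix (Fin n) (Fin n) ℝ) + (Φ * S)ᵀ * (Φ * S)
  have hA : IsUnit A.det := isUnit_det_smul_one_add_transpose_mul (Φ * S) hσ2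
  have hAu (i : Fin n) : A *ᵥ u i = (σ2 + lam i) • u i := by
    rw [add_mulVec, smul_mulVec, one_mulVec, hBt, ← Matrix.mul_assoc (S * Φᵀ), heig, add_smul]
  rw [trace_smul, trace_mul_cycle, hSS, trace_eq_sum_dotProduct_mulVec hortho, smul_eq_mul,
    Finset.mul_sum]
  refine Finset.sum_congr rfl fun i _ => ?_
  have hpos : σ2 + lam i ≠ 0 := (add_pos_of_pos_of_nonneg hσ2 (hnonneg i)).ne'
  rw [← mulVec_mulVec, nonsing_inv_mulVec_eq_inv_smul hA hpos (hAu i), mulVec_smul,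
    dotProduct_smul, smul_eq_mul]
  field_simp
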